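/- Second-order cross-gadget independence: with H = Δ(|1⟩⟨1|_{w₁} + |1⟩⟨1|_{w₂}) on K⊗ℂ²⊗ℂ² and V = √(Δ/2)(C₁⊗X_{w₁} + C₂⊗X_{w₂}) with Hermitian C₁, C₂ on K, the second-order self-energy term V_{−+}G₊(z)V_{+−} equals (Δ/(2(z−Δ)))·(C₁² + C₂²) ⊗ |00⟩⟨00|, containing no cross term C₁C₂. -/
import Mathlib


open scoped Kronecker

noncomputable section

/-- Projector onto `|0⟩` of a qubit. -/
def proj0 : Matrix (Fin 2) (Fin 2) ℂ := !![1, 0; 0, 0]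

/-- Projector onto `|1⟩` of a qubit. -/
def proj1 : Matrix (Fin 2) (Fin 2) ℂ := !![0, 0; 0, 1]

/-- The Pauli `X` matrix. -/
def pauliX : Matrix (Fin 2) (Fin 2) ℂ := !![0, 1; 1, 0]

/-- `|0⟩⟨1|`. -/
def e01 : Matrix (Fin 2) (Fin 2) ℂ := !![0, 1; 0, 0]

/-- `|1⟩⟨0|`. -/
def e10 : Matrix (Fin 2) (Fin 2) ℂ := !![0, 0; 1, 0]

lemma p0X : proj0 * pauliX = e01 := by
  ext i j; fin_cases i <;> fin_cases j <;> simp [proj0, pauliX, e01, Matrix.mul_apply, Fin.sum_univ_two]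
lemma Xp0 : pauliX * proj0 = e10 := by
  ext i j; fin_cases i <;> fin_cases j <;> simp [proj0, pauliX, e10, Matrix.mul_apply, Fin.sum_univ_two]
lemma p0p0 : proj0 * proj0 = proj0 := by
  ext i j; fin_cases i <;> fin_cases j <;> simp [proj0, Matrix.mul_apply, Fin.sum_univ_two]
lemma p0p1 : proj0 * proj1 = 0 := by
  ext i j; fin_cases i <;> fin_cases j <;> simp [proj0, proj1, Matrix.mul_apply, Fin.sum_univ_two]
lemma p1p0 : proj1 * proj0 = 0 := by
  ext i j; fin_cases i <;> fin_cases j <;> simp [proj0, proj1, Matrix.mul_apply, Fin.sum_univ_two]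
lemma p1p1 : proj1 * proj1 = proj1 := by
  ext i j; fin_cases i <;> fin_cases j <;> simp [proj1, Matrix.mul_apply, Fin.sum_univ_two]
lemma e01p0 : e01 * proj0 = 0 := by
  ext i j; fin_cases i <;> fin_cases j <;> simp [e01, proj0, Matrix.mul_apply, Fin.sum_univ_two]
lemma e01p1 : e01 * proj1 = e01 := by
  ext i j; fin_cases i <;> fin_cases j <;> simp [e01, proj1, Matrix.mul_apply, Fin.sum_univ_two]
lemma p1e10 : proj1 * e10 = e10 := by
  ext i j; fin_cases i <;> fin_cases j <;> simp [e10, proj1, Matrix.mul_apply, Fin.sum_univ_two]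
lemma p0e10 : proj0 * e10 = 0 := by
  ext i j; fin_cases i <;> fin_cases j <;> simp [e10, proj0, Matrix.mul_apply, Fin.sum_univ_two]
lemma e01e10 : e01 * e10 = proj0 := by
  ext i j; fin_cases i <;> fin_cases j <;> simp [e01, e10, proj0, Matrix.mul_apply, Fin.sum_univ_two]

/-- Second-order cross-gadget independence: with two mediator qubits,
`V = √(Δ/2) (C₁ ⊗ X_{w₁} + C₂ ⊗ X_{w₂})`, `Π₋ = I ⊗ |00⟩⟨00|`,
`Π₊ = I - Π₋` and `G₊(z) = ∑_{x ≠ 00} (z - h(x) Δ)⁻¹ |x⟩⟨x| ⊗ I`, the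
second-order self-energy term `V₋₊ G₊(z) V₊₋` equals
`(Δ/(2 (z - Δ))) (C₁² + C₂²) ⊗ |00⟩⟨00|`, with no cross term `C₁ C₂`. -/
theorem cross_gadget_independence
    {n : Type*} [Fintype n] [DecidableEq n]
    (C₁ C₂ : Matrix n n ℂ) (hC₁ : C₁.IsHermitian) (hC₂ : C₂.IsHermitian)
    (Δ : ℝ) (hΔ : 0 ≤ Δ) (z : ℂ) (hz1 : z ≠ (Δ : ℂ)) (hz2 : z ≠ 2 * (Δ : ℂ))
    (V : Matrix (n × Fin 2 × Fin 2) (n × Fin 2 × Fin 2) ℂ)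
    (hV : V = ((Real.sqrt (Δ / 2) : ℝ) : ℂ) •
      (C₁ ⊗ₖ (pauliX ⊗ₖ (1 : Matrix (Fin 2) (Fin 2) ℂ))
        + C₂ ⊗ₖ ((1 : Matrix (Fin 2) (Fin 2) ℂ) ⊗ₖ pauliX)))
    (Pm : Matrix (n × Fin 2 × Fin 2) (n × Fin 2 × Fin 2) ℂ)
    (hPm : Pm = (1 : Matrix n n ℂ) ⊗ₖ (proj0 ⊗ₖ proj0))
    (Gp : Matrix (n × Fin 2 × Fin 2) (n × Fin 2 × Fin 2) ℂ)
    (hGp : Gp = (z - (Δ : ℂ))⁻¹ • ((1 : Matrix n n ℂ) ⊗ₖ (proj1 ⊗ₖ proj0)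
        + (1 : Matrix n n ℂ) ⊗ₖ (proj0 ⊗ₖ proj1))
      + (z - 2 * (Δ : ℂ))⁻¹ • ((1 : Matrix n n ℂ) ⊗ₖ (proj1 ⊗ₖ proj1))) :
    (Pm * V * (1 - Pm)) * Gp * ((1 - Pm) * V * Pm) =
      ((Δ : ℂ) / (2 * (z - (Δ : ℂ)))) • ((C₁ ^ 2 + C₂ ^ 2) ⊗ₖ (proj0 ⊗ₖ proj0)) := by
  set s : ℂ := ((Real.sqrt (Δ / 2) : ℝ) : ℂ) with hs
  have hPV : Pm * V = s • (C₁ ⊗ₖ (e01 ⊗ₖ proj0) + C₂ ⊗ₖ (proj0 ⊗ₖ e01)) := by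
    simp [hV, hPm, Matrix.mul_smul, Matrix.mul_add, ← Matrix.mul_kronecker_mul,
      p0X, p0p0]
  have hVP : V * Pm = s • (C₁ ⊗ₖ (e10 ⊗ₖ proj0) + C₂ ⊗ₖ (proj0 ⊗ₖ e10)) := by
    simp [hV, hPm, Matrix.smul_mul, Matrix.add_mul, ← Matrix.mul_kronecker_mul,
      Xp0, p0p0]
  have hL : Pm * V * (1 - Pm) = s • (C₁ ⊗ₖ (e01 ⊗ₖ proj0) + C₂ ⊗ₖ (proj0 ⊗ₖ e01)) := by
    rw [Matrix.mul_sub, Matrix.mul_one, hPV, hPm]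
    simp [Matrix.smul_mul, Matrix.add_mul, ← Matrix.mul_kronecker_mul, e01p0, p0p0]
  have hR : (1 - Pm) * V * Pm = s • (C₁ ⊗ₖ (e10 ⊗ₖ proj0) + C₂ ⊗ₖ (proj0 ⊗ₖ e10)) := by
    rw [Matrix.sub_mul, Matrix.one_mul, Matrix.sub_mul, hVP, hPV, hPm]
    simp [Matrix.smul_mul, Matrix.add_mul, ← Matrix.mul_kronecker_mul, e01p0, p0p0]
  have hLG : (Pm * V * (1 - Pm)) * Gp
      = (s * (z - (Δ : ℂ))⁻¹) • (C₁ ⊗ₖ (e01 ⊗ₖ proj0) + C₂ ⊗ₖ (proj0 ⊗ₖ e01)) := by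
    rw [hL, hGp]
    simp only [Matrix.smul_mul, Matrix.mul_smul, Matrix.mul_add, Matrix.add_mul,
      ← Matrix.mul_kronecker_mul, Matrix.mul_one, Matrix.one_mul,
      e01p1, p0p0, e01p0, p0p1, p1p1,
      Matrix.kronecker_zero, Matrix.zero_kronecker, add_zero, zero_add,
      smul_zero, smul_smul, smul_add]
    ring_nf
  rw [hLG, hR]
  rw [Matrix.smul_mul, Matrix.mul_smul]
  simp only [Matrix.mul_add, Matrix.add_mul, ← Matrix.mul_kronecker_mul,
    e01e10, e01p0, p0e10, p0p0,
    Matrix.kronecker_zero, Matrix.zero_kronecker, add_zero, zero_add,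
    Matrix.mul_zero, Matrix.zero_mul, smul_smul]
  rw [← Matrix.add_kronecker]
  have hs2 : s * s = (Δ : ℂ) / 2 := by
    rw [hs, ← Complex.ofReal_mul, Real.mul_self_sqrt (by linarith)]
    push_cast; ring
  have : s * (z - (Δ : ℂ))⁻¹ * s = (Δ : ℂ) / (2 * (z - (Δ : ℂ))) := by
    have hzΔ : z - (Δ : ℂ) ≠ 0 := sub_ne_zero.mpr hz1
    rw [mul_right_comm, hs2]
    field_simp
  rw [this, pow_two, pow_two]

end
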